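/- arXiv:math/0607195 — 2 statements merged into one kernel-verified Lean document; each statement's English description precedes it below -/
import Mathlib

section
/- Every limit point L = (L₁, L₂) of the sequence (f(K'_n)) satisfies ln(12)/15 ≤ L_i ≤ 4·ln(2)/15 < ln(2)/3 for i = 1, 2; in particular L ≠ (0,0) and L ≠ (ln 2/3, ln 2/3). -/
open Finset Real Filter

/-- `S_m^e = ∑_{k even} C(m,k)·3^k`. -/
def Se (m : ℕ) : ℕ := ∑ k ∈ Finset.range (m + 1), if Even k then m.choose k * 3 ^ k else 0

/-- `S_m^o = ∑_{k odd} C(m,k)·3^k`. -/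
def So (m : ℕ) : ℕ := ∑ k ∈ Finset.range (m + 1), if Odd k then m.choose k * 3 ^ k else 0

/-- The sequence of `f`-invariants `f(K'_n)` in `ℝ²`. -/
noncomputable def fK' (n : ℕ) : ℝ × ℝ :=
  if Odd n then
    (Real.log ((4 : ℝ) ^ ((n + 1) / 2) * (Se ((n + 1) / 2) : ℝ)) / ((15 * (n : ℝ) - 9) / 2),
     Real.log ((4 : ℝ) ^ ((n + 1) / 2) * (So ((n + 1) / 2) : ℝ)) / ((15 * (n : ℝ) - 9) / 2))
  else
    (Real.log ((4 : ℝ) ^ (n / 2 + 1) * (Se (n / 2) : ℝ)) / ((15 * (n : ℝ) - 12) / 2),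
     Real.log ((4 : ℝ) ^ (n / 2 + 1) * (So (n / 2) : ℝ)) / ((15 * (n : ℝ) - 12) / 2))

/-!
`S^e_m` and `S^o_m` are the even and odd halves of the binomial expansion of `(3 + 1)^m`, so
`S^e_m + S^o_m = 4^m` and `S^e_m - S^o_m = (-3 + 1)^m = (-2)^m`. Hence both lie in `[4^m/4, 4^m]`
for `m ≥ 1`, the argument of every logarithm in `f(K'_n)` lies in `[4^n, 4^(n+1)]`, and both
coordinates of `f(K'_n)` are squeezed between two rational functions of `n` tending to
`2 log 4 / 15 = 4 log 2 / 15`. So the sequence converges, and its only limit point is that value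
on the diagonal.
-/

open Topology

theorem MapClusterPt.eq_of_tendsto {X ι : Type*} [TopologicalSpace X] [T2Space X]
    {F : Filter ι} {u : ι → X} {x y : X} (hx : MapClusterPt x F u) (hy : Tendsto u F (𝓝 y)) :
    x = y :=
  eq_of_nhds_neBot (Filter.NeBot.mono hx (inf_le_inf_left _ hy))

theorem tendsto_affine_div_affine (a b c d : ℝ) (hc : c ≠ 0) :
    Tendsto (fun n : ℕ => (a * n + b) / (c * n + d)) atTop (𝓝 (a / c)) := by
  have h : Tendsto (fun n : ℕ => (a + b / n) / (c + d / n)) atTop (𝓝 ((a + 0) / (c + 0))) :=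
    (tendsto_const_nhds.add (tendsto_const_div_atTop_nhds_zero_nat b)).div
      (tendsto_const_nhds.add (tendsto_const_div_atTop_nhds_zero_nat d)) (by simpa using hc)
  rw [add_zero, add_zero] at h
  refine h.congr' ?_
  filter_upwards [eventually_ne_atTop 0] with n hn
  have hn' : (n : ℝ) ≠ 0 := Nat.cast_ne_zero.mpr hn
  rw [← mul_div_mul_right _ _ hn', add_mul, add_mul, div_mul_cancel₀ _ hn',
    div_mul_cancel₀ _ hn', mul_comm a, mul_comm c]

theorem Se_add_So (m : ℕ) : Se m + So m = 4 ^ m := by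
  rw [show 4 = 3 + 1 by rfl, add_pow, Se, So, ← Finset.sum_add_distrib]
  refine Finset.sum_congr rfl fun k _ => ?_
  rcases Nat.even_or_odd k with hk | hk
  · simp [hk, Nat.not_odd_iff_even.mpr hk, mul_comm]
  · simp [hk, Nat.not_even_iff_odd.mpr hk, mul_comm]

theorem Se_sub_So (m : ℕ) : (Se m : ℤ) - So m = (-2) ^ m := by
  rw [show (-2 : ℤ) = -3 + 1 by norm_num, add_pow, Se, So]
  push_cast [apply_ite (Nat.cast : ℕ → ℤ)]
  rw [← Finset.sum_sub_distrib]
  refine Finset.sum_congr rfl fun k _ => ?_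
  rcases Nat.even_or_odd k with hk | hk
  · simp [hk, Nat.not_odd_iff_even.mpr hk, hk.neg_pow, mul_comm]
  · simp [hk, Nat.not_even_iff_odd.mpr hk, hk.neg_pow, mul_comm]

theorem Se_le (m : ℕ) : Se m ≤ 4 ^ m := Se_add_So m ▸ Nat.le_add_right _ _

theorem So_le (m : ℕ) : So m ≤ 4 ^ m := Se_add_So m ▸ Nat.le_add_left _ _

/-- Both halves differ from `4^m / 2` by at most `2^m / 2 ≤ 4^m / 4`. -/
theorem four_pow_le_four_mul_Se_and_So {m : ℕ} (hm : 1 ≤ m) :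
    4 ^ m ≤ 4 * Se m ∧ 4 ^ m ≤ 4 * So m := by
  have hsum : (Se m : ℤ) + So m = 4 ^ m := by exact_mod_cast Se_add_So m
  have hdiff := Se_sub_So m
  have habs : |(-2 : ℤ) ^ m| = 2 ^ m := by rw [abs_pow, abs_neg, abs_two]
  have h2 : (2 : ℤ) ≤ 2 ^ m := le_self_pow₀ (by norm_num) (by omega)
  have h4 : (4 : ℤ) ^ m = 2 ^ m * 2 ^ m := by rw [← mul_pow]; norm_num
  have hle := abs_le.mp habs.le
  constructor <;> zify <;> nlinarith [hle.1, hle.2]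

theorem four_pow_le_four_pow_mul {n a m S : ℕ} (ha : a + m = n + 1) (hS : 4 ^ m ≤ 4 * S)
    (hS' : S ≤ 4 ^ m) : 4 ^ n ≤ 4 ^ a * S ∧ 4 ^ a * S ≤ 4 ^ (n + 1) := by
  constructor
  · have : 4 ^ n * 4 ≤ 4 ^ a * S * 4 := by
      calc 4 ^ n * 4 = 4 ^ a * 4 ^ m := by rw [← pow_succ, ← pow_add, ha]
        _ ≤ 4 ^ a * (4 * S) := Nat.mul_le_mul_left _ hS
        _ = 4 ^ a * S * 4 := by ring
    omega
  · calc 4 ^ a * S ≤ 4 ^ a * 4 ^ m := Nat.mul_le_mul_left _ hS'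
      _ = 4 ^ (n + 1) := by rw [← pow_add, ha]

theorem log_div_mem_Icc {b x c : ℝ} {n : ℕ} (hb : 1 ≤ b) (hn : 1 ≤ n) (hx : b ^ n ≤ x)
    (hx' : x ≤ b ^ (n + 1)) (hc : 9 ≤ c) (hc' : c ≤ 12) :
    log x / ((15 * n - c) / 2) ∈
      Set.Icc (2 * log b * n / (15 * n - 9)) (2 * log b * (n + 1) / (15 * n - 12)) := by
  have hn' : (1 : ℝ) ≤ n := by exact_mod_cast hn
  have hlogb : 0 ≤ log b := log_nonneg hb
  have hpos : 0 < b ^ n := by positivity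
  have hlo : n * log b ≤ log x := by rw [← log_pow]; exact log_le_log hpos hx
  have hhi : log x ≤ (n + 1) * log b := by
    rw [← Nat.cast_add_one, ← log_pow]; exact log_le_log (hpos.trans_le hx) hx'
  rw [div_div_eq_mul_div]
  constructor
  · rw [div_le_div_iff₀ (by linarith) (by linarith)]
    nlinarith [mul_nonneg (sub_nonneg.mpr hlo) (by linarith : (0 : ℝ) ≤ 15 * n - 9),
      mul_nonneg (mul_nonneg (by linarith : (0 : ℝ) ≤ n) hlogb) (sub_nonneg.mpr hc)]
  · rw [div_le_div_iff₀ (by linarith) (by linarith)]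
    nlinarith [mul_nonneg (sub_nonneg.mpr hhi) (by linarith : (0 : ℝ) ≤ 15 * n - 12),
      mul_nonneg (mul_nonneg (by linarith : (0 : ℝ) ≤ n + 1) hlogb) (sub_nonneg.mpr hc')]

theorem log_four_pow_mul_Se_So_div_mem_Icc {n a m : ℕ} {c : ℝ} (hn : 1 ≤ n)
    (ha : a + m = n + 1) (hm : 1 ≤ m) (hc : 9 ≤ c) (hc' : c ≤ 12) :
    (log ((4 : ℝ) ^ a * (Se m : ℝ)) / ((15 * n - c) / 2),
      log ((4 : ℝ) ^ a * (So m : ℝ)) / ((15 * n - c) / 2)) ∈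
    Set.Icc (2 * log 4 * n / (15 * n - 9), 2 * log 4 * n / (15 * n - 9))
      (2 * log 4 * (n + 1) / (15 * n - 12), 2 * log 4 * (n + 1) / (15 * n - 12)) := by
  obtain ⟨hSe, hSo⟩ := four_pow_le_four_mul_Se_and_So hm
  obtain ⟨he, he'⟩ := four_pow_le_four_pow_mul ha hSe (Se_le m)
  obtain ⟨ho, ho'⟩ := four_pow_le_four_pow_mul ha hSo (So_le m)
  have e := log_div_mem_Icc (b := 4) (by norm_num) hn (x := 4 ^ a * Se m)
    (by exact_mod_cast he) (by exact_mod_cast he') hc hc'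
  have o := log_div_mem_Icc (b := 4) (by norm_num) hn (x := 4 ^ a * So m)
    (by exact_mod_cast ho) (by exact_mod_cast ho') hc hc'
  exact ⟨Prod.mk_le_mk.mpr ⟨e.1, o.1⟩, Prod.mk_le_mk.mpr ⟨e.2, o.2⟩⟩

theorem fK'_mem_Icc {n : ℕ} (hn : 2 ≤ n) :
    fK' n ∈ Set.Icc (2 * log 4 * n / (15 * n - 9), 2 * log 4 * n / (15 * n - 9))
      (2 * log 4 * (n + 1) / (15 * n - 12), 2 * log 4 * (n + 1) / (15 * n - 12)) := by
  unfold fK'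
  split_ifs with hodd
  · obtain ⟨k, rfl⟩ := hodd
    exact log_four_pow_mul_Se_So_div_mem_Icc (by omega) (by omega) (by omega) le_rfl
      (by norm_num)
  · obtain ⟨k, rfl⟩ := Nat.not_odd_iff_even.mp hodd
    exact log_four_pow_mul_Se_So_div_mem_Icc (by omega) (by omega) (by omega) (by norm_num)
      le_rfl

theorem tendsto_fK' : Tendsto fK' atTop (𝓝 (4 * log 2 / 15, 4 * log 2 / 15)) := by
  have h4 : 4 * log 2 / 15 = 2 * log 4 / 15 := by
    rw [show (4 : ℝ) = 2 ^ 2 by norm_num, log_pow]; ring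
  have hlo : Tendsto (fun n : ℕ => 2 * log 4 * n / (15 * n - 9)) atTop (𝓝 (4 * log 2 / 15)) := by
    simpa [h4, sub_eq_add_neg] using tendsto_affine_div_affine (2 * log 4) 0 15 (-9) (by norm_num)
  have hhi : Tendsto (fun n : ℕ => 2 * log 4 * (n + 1) / (15 * n - 12)) atTop
      (𝓝 (4 * log 2 / 15)) := by
    simpa [h4, sub_eq_add_neg, mul_add] using
      tendsto_affine_div_affine (2 * log 4) (2 * log 4) 15 (-12) (by norm_num)
  have hmem := (eventually_ge_atTop 2).mono fun n hn => fK'_mem_Icc hn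
  rw [Prod.tendsto_iff]
  exact ⟨tendsto_of_tendsto_of_tendsto_of_le_of_le' hlo hhi
      (hmem.mono fun n h => h.1.1) (hmem.mono fun n h => h.2.1),
    tendsto_of_tendsto_of_tendsto_of_le_of_le' hlo hhi
      (hmem.mono fun n h => h.1.2) (hmem.mono fun n h => h.2.2)⟩

/-- Every limit point `L = (L₁, L₂)` of the sequence `(f(K'_n))` satisfies
`ln 12/15 ≤ Lᵢ ≤ 4·ln 2/15 < ln 2/3`; in particular `L ≠ (0,0)` and
`L ≠ (ln 2/3, ln 2/3)`. -/
theorem f_K'n_limit_points (L : ℝ × ℝ) (hL : MapClusterPt L atTop fK') :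
    (Real.log 12 / 15 ≤ L.1 ∧ L.1 ≤ 4 * Real.log 2 / 15 ∧
      Real.log 12 / 15 ≤ L.2 ∧ L.2 ≤ 4 * Real.log 2 / 15) ∧
    4 * Real.log 2 / 15 < Real.log 2 / 3 ∧
    L ≠ ((0 : ℝ), (0 : ℝ)) ∧ L ≠ (Real.log 2 / 3, Real.log 2 / 3) := by
  obtain rfl := hL.eq_of_tendsto tendsto_fK'
  have hlog2 : 0 < log 2 := log_pos one_lt_two
  have hlog12 : log 12 ≤ 4 * log 2 := by
    rw [← log_rpow two_pos]
    exact log_le_log (by norm_num) (by norm_num)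
  refine ⟨⟨by linarith, le_rfl, by linarith, le_rfl⟩, by linarith, ?_, ?_⟩ <;>
    rw [Ne, Prod.mk.injEq] <;> intro h <;> linarith [h.1]
end

section
/- For every a, b in S_4 = Z_2[T]/(T^2+T+1), the product Φ(a,b) = φ(a,b)·φ(b, Ta+(1−T)b)·φ(Ta+(1−T)b, a) in Z/2Z (written multiplicatively as {1,t}) equals 1 if a = b and t if a ≠ b. -/
/-! `S₄` is the field `𝔽₄ = {0, 1, T, T + 1}`, and `φ(a, b) = t` exactly when `a ≠ b` and neither
`a` nor `b` is `T`. Since `a * a = a`, `Φ(a, a) = φ(a, a)³ = 1`. For `a ≠ b` the elements `a`, `b`,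
`a * b` are pairwise distinct, because `a * b - b = T (a - b)` and `a * b - a = (1 - T)(b - a)` with
`T` and `1 - T` units; so `Φ(a, b)` is the product of `φ` over the three edges of a triangle. If `T`
is not a vertex, each edge contributes `t`; if it is, the two edges at `T` contribute `1` and the
opposite edge `t`. Either way `Φ(a, b) = t`. -/

/-- The ring `(ℤ/2ℤ)[T]/(T²+T+1)`. -/
def R2 : Type :=
  Polynomial (ZMod 2) ⧸ Ideal.span ({Polynomial.X ^ 2 + Polynomial.X + 1} : Set (Polynomial (ZMod 2)))

noncomputable instance : CommRing R2 := Ideal.Quotient.commRing _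

/-- The image of the variable `T` in the quotient. -/
noncomputable def Tq : R2 :=
  Ideal.Quotient.mk _ Polynomial.X

/-- The quandle operation `a * b = T·a + (1-T)·b`. -/
noncomputable def qop (a b : R2) : R2 := Tq * a + (1 - Tq) * b

/-- The group `A = ℤ/2ℤ = ⟨t | t² = 1⟩`, written multiplicatively. -/
abbrev A2 : Type := Multiplicative (ZMod 2)

/-- The generator `t` of `A = ⟨t | t² = 1⟩`. -/
def tA : A2 := Multiplicative.ofAdd (1 : ZMod 2)

open Classical in
/-- The 2-cocycle `φ(a,b) = t^{χ_{(0,1)}+χ_{(0,T+1)}+χ_{(1,0)}+χ_{(1,T+1)}+χ_{(T+1,0)}+χ_{(T+1,1)}}`. -/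
noncomputable def phi (a b : R2) : A2 :=
  tA ^ ((if (a, b) = ((0 : R2), (1 : R2)) then 1 else 0) +
        (if (a, b) = ((0 : R2), Tq + 1) then 1 else 0) +
        (if (a, b) = ((1 : R2), (0 : R2)) then 1 else 0) +
        (if (a, b) = ((1 : R2), Tq + 1) then 1 else 0) +
        (if (a, b) = (Tq + 1, (0 : R2)) then 1 else 0) +
        (if (a, b) = (Tq + 1, (1 : R2)) then 1 else 0) : ℕ)

open Polynomial

theorem AdjoinRoot.exists_eq_of_mul_root_add_of {R : Type*} [CommRing R] {f : R[X]}
    (hf : f.Monic) (hdeg : f.natDegree = 2) (x : AdjoinRoot f) :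
    ∃ d c : R, x = AdjoinRoot.of f d * AdjoinRoot.root f + AdjoinRoot.of f c := by
  obtain ⟨p, rfl⟩ := AdjoinRoot.mk_surjective x
  have hf1 : f ≠ 1 := fun h => by simp [h] at hdeg
  obtain ⟨d, c, h⟩ := exists_eq_X_add_C_of_natDegree_le_one
    (by have := natDegree_modByMonic_lt p hf hf1; omega : (p %ₘ f).natDegree ≤ 1)
  refine ⟨d, c, ?_⟩
  rw [← AdjoinRoot.mk_leftInverse hf (AdjoinRoot.mk f p), AdjoinRoot.modByMonicHom_mk, h]
  simp

theorem R2_two_eq_zero : (2 : R2) = 0 := by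
  have := map_ofNat (AdjoinRoot.of (X ^ 2 + X + 1 : (ZMod 2)[X])) 2
  rw [show (2 : ZMod 2) = 0 from rfl, map_zero] at this
  exact this.symm

theorem Tq_sq_add_Tq_add_one : Tq ^ 2 + Tq + 1 = 0 := by
  have := AdjoinRoot.mk_self (f := (X ^ 2 + X + 1 : (ZMod 2)[X]))
  simp only [map_add, map_pow, AdjoinRoot.mk_X, map_one] at this
  exact this

instance : Nontrivial R2 :=
  AdjoinRoot.nontrivial (f := X ^ 2 + X + 1) (by
    have : (X ^ 2 + X + 1 : (ZMod 2)[X]).degree = 2 := by compute_degree!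
    simp [this])

theorem R2_cases (a : R2) : a = 0 ∨ a = 1 ∨ a = Tq ∨ a = Tq + 1 := by
  obtain ⟨d, c, h⟩ := AdjoinRoot.exists_eq_of_mul_root_add_of (f := X ^ 2 + X + 1)
    (by monicity!) (by compute_degree!) a
  have zmod2 : ∀ c : ZMod 2, c = 0 ∨ c = 1 := by decide
  rcases zmod2 d with rfl | rfl <;> rcases zmod2 c with rfl | rfl <;>
    simp only [map_zero, map_one, zero_mul, one_mul, add_zero, zero_add] at h
  -- `h` lives in `AdjoinRoot _`, which is `R2` only up to unfolding, so it closes the goal by defeq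
  exacts [Or.inl h, Or.inr <| Or.inl h, Or.inr <| Or.inr <| Or.inl h, Or.inr <| Or.inr <| Or.inr h]

theorem Tq_mul_Tq_add_one : Tq * (Tq + 1) = 1 := by
  linear_combination Tq_sq_add_Tq_add_one - R2_two_eq_zero

theorem one_sub_Tq : 1 - Tq = Tq + 1 := by
  linear_combination (-Tq) * R2_two_eq_zero

theorem isUnit_Tq : IsUnit Tq := .of_mul_eq_one _ Tq_mul_Tq_add_one

theorem isUnit_Tq_add_one : IsUnit (Tq + 1) := .of_mul_eq_one_right _ Tq_mul_Tq_add_one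

theorem Tq_ne_zero : Tq ≠ 0 := isUnit_Tq.ne_zero

theorem Tq_add_one_ne_zero : Tq + 1 ≠ 0 := isUnit_Tq_add_one.ne_zero

theorem Tq_ne_one : Tq ≠ 1 := by
  intro h
  apply Tq_add_one_ne_zero
  rw [h, one_add_one_eq_two, R2_two_eq_zero]

section AlexanderQuandle

variable {R : Type*} [Ring R] {t a b : R}

theorem mul_add_one_sub_mul_ne_left (ht : IsUnit (1 - t)) (hab : a ≠ b) :
    t * a + (1 - t) * b ≠ a := by
  rw [Ne, ← sub_eq_zero, show t * a + (1 - t) * b - a = (1 - t) * (b - a) by noncomm_ring,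
    ht.mul_right_eq_zero, sub_eq_zero]
  exact hab.symm

theorem mul_add_one_sub_mul_ne_right (ht : IsUnit t) (hab : a ≠ b) :
    t * a + (1 - t) * b ≠ b := by
  rw [Ne, ← sub_eq_zero, show t * a + (1 - t) * b - b = t * (a - b) by noncomm_ring,
    ht.mul_right_eq_zero, sub_eq_zero]
  exact hab

end AlexanderQuandle

theorem qop_self (a : R2) : qop a a = a := by
  unfold qop; ring

theorem qop_ne_left {a b : R2} (hab : a ≠ b) : qop a b ≠ a :=
  mul_add_one_sub_mul_ne_left (one_sub_Tq ▸ isUnit_Tq_add_one) hab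

theorem qop_ne_right {a b : R2} (hab : a ≠ b) : qop a b ≠ b :=
  mul_add_one_sub_mul_ne_right isUnit_Tq hab

section AvoidingPairWeight

variable {α G : Type*} [DecidableEq α] [Monoid G]

def avoidingPairWeight (τ : α) (g : G) (x y : α) : G :=
  if x = y ∨ x = τ ∨ y = τ then 1 else g

theorem avoidingPairWeight_self (τ : α) (g : G) (x : α) : avoidingPairWeight τ g x x = 1 := by
  simp [avoidingPairWeight]

theorem avoidingPairWeight_cycle {τ : α} {g : G} (hg : g * g = 1) {x y z : α}
    (hxy : x ≠ y) (hyz : y ≠ z) (hzx : z ≠ x) :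
    avoidingPairWeight τ g x y * avoidingPairWeight τ g y z * avoidingPairWeight τ g z x = g := by
  by_cases hx : x = τ <;> by_cases hy : y = τ <;> by_cases hz : z = τ <;>
    simp_all [avoidingPairWeight]

end AvoidingPairWeight

theorem tA_mul_tA : tA * tA = 1 := rfl

open Classical in
theorem phi_eq_avoidingPairWeight (a b : R2) : phi a b = avoidingPairWeight Tq tA a b := by
  rcases R2_cases a with rfl | rfl | rfl | rfl <;> rcases R2_cases b with rfl | rfl | rfl | rfl <;>
    simp [phi, avoidingPairWeight, Tq_ne_zero, Tq_add_one_ne_zero, Tq_ne_one, Tq_ne_zero.symm,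
      Tq_add_one_ne_zero.symm, Tq_ne_one.symm]

open Classical in
/-- `Φ(a,b) = φ(a,b)·φ(b, a*b)·φ(a*b, a)` equals `1` if `a = b` and `t` otherwise. -/
theorem Phi_eq (a b : R2) :
    phi a b * phi b (qop a b) * phi (qop a b) a = if a = b then 1 else tA := by
  simp only [phi_eq_avoidingPairWeight]
  split_ifs with hab
  · rw [← hab, qop_self, avoidingPairWeight_self, one_mul, one_mul]
  · exact avoidingPairWeight_cycle tA_mul_tA hab (qop_ne_right hab).symm (qop_ne_left hab)
end
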